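/- arXiv:2208.06491 — 5 statements merged into one kernel-verified Lean document; each statement's English description precedes it below -/
import Mathlib

section
/- Let r > 0, let F be a finite-dimensional real normed vector space, let λ : C([-r,0],ℝ) → F be a continuous linear map (where C([-r,0],ℝ) carries the sup norm), and let ε > 0. Then there exists a continuously differentiable function ψ : ℝ → ℝ such that λ applied to the restriction of ψ to [-r,0] equals 0, ψ'(0) = 1, and |ψ(t)| < ε for all t ∈ [-r,0]. -/
/-!
The functions `a * sin (t / a)` have slope `1` at `0` and sup norm at most `a`, so their images
under `λ` have norm `O(a)`. As `F` is finite-dimensional, all these images lie in the span of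
finitely many of them, and by the open mapping theorem each one is a combination of those with
coefficients of total size `O(a)`. Subtracting that combination from `a * sin (t / a)` for small
`a` gives a function in the kernel of `λ` that is still small, with slope at `0` close to `1`;
dividing by that slope finishes the proof.
-/

noncomputable def restrC {E : Type*} [TopologicalSpace E] [Zero E] (r : ℝ) (φ : ℝ → E) :
    C(Set.Icc (-r) (0:ℝ), E) := by
  classical exact
    if h : ContinuousOn φ (Set.Icc (-r) 0) then ⟨(Set.Icc (-r) 0).restrict φ, h.restrict⟩ else 0

open Set

theorem restrC_eq_restrict {E : Type*} [TopologicalSpace E] [Zero E] (r : ℝ) (f : C(ℝ, E)) :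
    restrC r f = f.restrict (Icc (-r) 0) := by
  rw [restrC, dif_pos f.continuous.continuousOn]
  rfl

section FiniteDimensional

variable {ι F : Type*} [NormedAddCommGroup F] [NormedSpace ℝ F] [FiniteDimensional ℝ F]

theorem exists_fin_forall_sum_smul_eq_and_sum_abs_le (f : ι → F) :
    ∃ (m : ℕ) (j : Fin m → ι) (K : ℝ), 0 ≤ K ∧ ∀ n, ∃ c : Fin m → ℝ,
      ∑ i, c i • f (j i) = f n ∧ ∑ i, |c i| ≤ K * ‖f n‖ := by
  set m := Module.finrank ℝ (Submodule.span ℝ (range f))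
  obtain ⟨g, hg_mem, hg_span, -⟩ := Submodule.exists_fun_fin_finrank_span_eq ℝ (range f)
  choose j hj using hg_mem
  set L := (Fintype.linearCombination ℝ (f ∘ j)).rangeRestrict
  obtain ⟨C, hC, hL⟩ := (LinearMap.toContinuousLinearMap L).exists_preimage_norm_le
    (LinearMap.surjective_rangeRestrict _)
  refine ⟨m, j, m * C, by positivity, fun n => ?_⟩
  have hfn : f n ∈ LinearMap.range (Fintype.linearCombination ℝ (f ∘ j)) := by
    rw [Fintype.range_linearCombination, show f ∘ j = g from funext hj, hg_span]
    exact Submodule.subset_span (mem_range_self n)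
  obtain ⟨c, hc, hc_le⟩ := hL ⟨f n, hfn⟩
  refine ⟨c, by simpa [L, Fintype.linearCombination_apply] using congrArg Subtype.val hc, ?_⟩
  calc ∑ i, |c i| ≤ (Finset.univ : Finset (Fin m)).card • ‖c‖ :=
        Finset.sum_le_card_nsmul _ _ _ fun i _ => norm_le_pi_norm c i
    _ ≤ m * (C * ‖f n‖) := by
        rw [Finset.card_univ, Fintype.card_fin, nsmul_eq_mul]; gcongr; exact hc_le
    _ = m * C * ‖f n‖ := (mul_assoc _ _ _).symm

end FiniteDimensional

theorem exists_contDiff_hasDerivAt_one_of_sum_smul_eq {κ F : Type*} [Fintype κ] [AddCommGroup F]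
    [Module ℝ F] (Λ : C(ℝ, ℝ) →ₗ[ℝ] F) {g : C(ℝ, ℝ)} {h : κ → C(ℝ, ℝ)}
    (hg : ContDiff ℝ 1 g) (hg₀ : HasDerivAt g 1 0) (hh : ∀ i, ContDiff ℝ 1 (h i))
    (hh₀ : ∀ i, HasDerivAt (h i) 1 0) (hh_le : ∀ i t, |h i t| ≤ 1) {c : κ → ℝ}
    (hc : ∑ i, c i • Λ (h i) = Λ g) (hc_le : ∑ i, |c i| ≤ 1 / 2) :
    ∃ χ : C(ℝ, ℝ), ContDiff ℝ 1 χ ∧ Λ χ = 0 ∧ HasDerivAt χ 1 0 ∧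
      ∀ t, |χ t| ≤ 2 * (|g t| + ∑ i, |c i|) := by
  set S := ∑ i, c i with hS_def
  have hS : 1 / 2 ≤ 1 - S := by
    linarith [(abs_le.mp ((Finset.abs_sum_le_sum_abs c _).trans hc_le)).2]
  set χ := (1 - S)⁻¹ • (g - ∑ i, c i • h i)
  have hχ : ⇑χ = fun t => (1 - S)⁻¹ * (g t - ∑ i, c i * h i t) := by
    ext t; simp [χ]
  refine ⟨χ, ?_, ?_, ?_, fun t => ?_⟩
  · rw [hχ]; fun_prop
  · simp only [χ, map_smul, map_sub, map_sum, hc, sub_self, smul_zero]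
  · have hχ₀ := (hg₀.fun_sub (HasDerivAt.fun_sum (u := Finset.univ) fun i _ =>
      (hh₀ i).const_mul (c i))).const_mul (1 - S)⁻¹
    rw [hχ]
    simpa only [mul_one, ← hS_def, inv_mul_cancel₀ (by linarith : 1 - S ≠ 0)] using hχ₀
  · have hsum : |∑ i, c i * h i t| ≤ ∑ i, |c i| := calc
      |∑ i, c i * h i t| ≤ ∑ i, |c i * h i t| := Finset.abs_sum_le_sum_abs _ _
      _ ≤ ∑ i, |c i| := Finset.sum_le_sum fun i _ => by
        rw [abs_mul]; exact mul_le_of_le_one_right (abs_nonneg _) (hh_le i t)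
    calc |χ t| = (1 - S)⁻¹ * |g t - ∑ i, c i * h i t| := by
          rw [hχ, abs_mul, abs_of_pos (by positivity)]
      _ ≤ 2 * (|g t| + ∑ i, |c i|) := by
          gcongr
          · rw [inv_le_comm₀ (by linarith) two_pos]; linarith
          · exact (abs_sub _ _).trans (add_le_add le_rfl hsum)

noncomputable def scaledSin (a : ℝ) : C(ℝ, ℝ) :=
  ⟨fun t => a * Real.sin (t / a), by fun_prop⟩

theorem scaledSin_apply (a t : ℝ) : scaledSin a t = a * Real.sin (t / a) := rfl

theorem contDiff_scaledSin (a : ℝ) : ContDiff ℝ 1 (scaledSin a) := by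
  change ContDiff ℝ 1 fun t => a * Real.sin (t / a)
  fun_prop

theorem hasDerivAt_scaledSin {a : ℝ} (ha : a ≠ 0) : HasDerivAt (scaledSin a) 1 0 := by
  change HasDerivAt (fun t => a * Real.sin (t / a)) 1 0
  simpa [ha] using
    ((Real.hasDerivAt_sin _).comp 0 ((hasDerivAt_id (0 : ℝ)).div_const a)).const_mul a

theorem abs_scaledSin_le {a : ℝ} (ha : 0 ≤ a) (t : ℝ) : |scaledSin a t| ≤ a := by
  rw [scaledSin_apply, abs_mul, abs_of_nonneg ha]
  exact mul_le_of_le_one_right ha (Real.abs_sin_le_one _)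

theorem norm_apply_restrC_scaledSin_le {F : Type*} [SeminormedAddCommGroup F] [NormedSpace ℝ F]
    {r a : ℝ} (lam : C(Icc (-r) (0:ℝ), ℝ) →L[ℝ] F) (ha : 0 ≤ a) :
    ‖lam (restrC r (scaledSin a))‖ ≤ ‖lam‖ * a := by
  rw [restrC_eq_restrict]
  exact lam.le_of_opNorm_le_of_le le_rfl
    ((ContinuousMap.norm_le _ ha).mpr fun t => abs_scaledSin_le ha t)

theorem stmt0_general {F : Type*} [NormedAddCommGroup F] [NormedSpace ℝ F] [FiniteDimensional ℝ F]
    (r : ℝ)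
    (lam : C(Set.Icc (-r) (0:ℝ), ℝ) →L[ℝ] F) (ε : ℝ) (hε : 0 < ε) :
    ∃ ψ : ℝ → ℝ, ContDiff ℝ 1 ψ ∧ lam (restrC r ψ) = 0 ∧ deriv ψ 0 = 1 ∧
      ∀ t ∈ Set.Icc (-r) (0:ℝ), |ψ t| < ε := by
  let Λ : C(ℝ, ℝ) →ₗ[ℝ] F := lam.toLinearMap ∘ₗ
    (ContinuousMap.compRightAlgHom ℝ ℝ ((ContinuousMap.id ℝ).restrict (Icc (-r) 0))).toLinearMap
  have hΛ (f : C(ℝ, ℝ)) : Λ f = lam (restrC r f) := by rw [restrC_eq_restrict]; rfl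
  set a : ℕ → ℝ := fun n => 1 / (n + 1)
  have ha (n : ℕ) : 0 < a n := by positivity
  have ha_le (n : ℕ) : a n ≤ 1 := div_le_one_of_le₀ (by simp) (by positivity)
  obtain ⟨m, j, K, hK, hspan⟩ :=
    exists_fin_forall_sum_smul_eq_and_sum_abs_le fun n => Λ (scaledSin (a n))
  set M := K * ‖lam‖
  obtain ⟨n, hn⟩ := exists_nat_one_div_lt (show 0 < min (1 / 2) (ε / 2) / (M + 1) by positivity)
  have hMn : (M + 1) * a n < min (1 / 2) (ε / 2) := by
    rwa [lt_div_iff₀ (by positivity), mul_comm] at hn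
  obtain ⟨c, hc, hc_le⟩ := hspan n
  have hc_small : ∑ i, |c i| ≤ M * a n := calc
    ∑ i, |c i| ≤ K * ‖Λ (scaledSin (a n))‖ := hc_le
    _ ≤ K * (‖lam‖ * a n) := by
      rw [hΛ]; gcongr; exact norm_apply_restrC_scaledSin_le lam (ha n).le
    _ = M * a n := (mul_assoc _ _ _).symm
  obtain ⟨χ, hχ, hΛχ, hχ₀, hχ_le⟩ := exists_contDiff_hasDerivAt_one_of_sum_smul_eq Λ
    (contDiff_scaledSin _) (hasDerivAt_scaledSin (ha n).ne') (fun i => contDiff_scaledSin _)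
    (fun i => hasDerivAt_scaledSin (ha _).ne')
    (fun i t => (abs_scaledSin_le (ha _).le t).trans (ha_le _)) hc
    (by linarith [min_le_left (1 / 2 : ℝ) (ε / 2), ha n])
  refine ⟨χ, hχ, by rw [← hΛ, hΛχ], hχ₀.deriv, fun t _ => ?_⟩
  calc |χ t| ≤ 2 * (|scaledSin (a n) t| + ∑ i, |c i|) := hχ_le t
    _ ≤ 2 * ((M + 1) * a n) := by linarith [abs_scaledSin_le (ha n).le t]
    _ < ε := by linarith [min_le_right (1 / 2 : ℝ) (ε / 2)]

/-- Lemma 2.1: given a continuous linear map `λ` from `C([-r,0],ℝ)` (sup norm) into a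
finite-dimensional real normed space `F`, and `ε > 0`, there is a continuously differentiable
`ψ` with `λ(ψ|_{[-r,0]}) = 0`, `ψ'(0) = 1` and `|ψ(t)| < ε` on `[-r,0]`. -/
theorem stmt0 {F : Type*} [NormedAddCommGroup F] [NormedSpace ℝ F] [FiniteDimensional ℝ F]
    (r : ℝ) (hr : 0 < r)
    (lam : C(Set.Icc (-r) (0:ℝ), ℝ) →L[ℝ] F) (ε : ℝ) (hε : 0 < ε) :
    ∃ ψ : ℝ → ℝ, ContDiff ℝ 1 ψ ∧ lam (restrC r ψ) = 0 ∧ deriv ψ 0 = 1 ∧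
      ∀ t ∈ Set.Icc (-r) (0:ℝ), |ψ t| < ε :=
  stmt0_general r lam ε hε
end

section
/- Let F be a finite-dimensional real normed vector space, W ⊆ F a nonempty open set, N ≥ 1, V ⊆ ℝ^N a nonempty open set, and let R : W × V → ℝ^N be continuously differentiable with ‖D₂R(η,v)‖ ≤ 1/2 (operator norm of the partial Fréchet derivative in the second variable) for all (η,v) ∈ W × V. For η ∈ W define S_η : V → ℝ^N by S_η(v) = v - R(η,v). Then the set ⋃_{η∈W} {η} × S_η(V) = {(η,y) ∈ W × ℝ^N : ∃ v ∈ V, y = v - R(η,v)} is open in F × ℝ^N. -/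
/-!
For fixed `η`, the map `S_η = id - R(η, ·)` differs from the identity by a `1/2`-Lipschitz map on
every ball inside `V`, so by the contraction argument behind the inverse function theorem
`S_η` maps `closedBall v ε` onto a set containing `closedBall (S_η v) (ε / 2)`. Since
`η ↦ S_η v` is continuous, the ball `closedBall (S_η v) (ε / 2)` contains a fixed ball around
`S_{η₀} v` for all `η` near `η₀`, which gives a product neighbourhood inside the set.
-/

open Metric Set Filter Topology
open scoped NNReal

section

variable {E : Type*} [NormedAddCommGroup E] [NormedSpace ℝ E] [CompleteSpace E]

theorem closedBall_subset_image_sub_of_lipschitzOnWith {g : E → E} {c : ℝ≥0} {v : E} {ε : ℝ}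
    (hε : 0 ≤ ε) (hg : LipschitzOnWith c g (closedBall v ε)) :
    closedBall (v - g v) ((1 - c) * ε) ⊆ (fun w => w - g w) '' closedBall v ε := by
  have hsub : (fun w => w - g w) - ⇑(ContinuousLinearMap.id ℝ E) = -g := by
    funext w
    simp
  have happrox : ApproximatesLinearOn (fun w => w - g w) (ContinuousLinearMap.id ℝ E)
      (closedBall v ε) c := by
    rw [ApproximatesLinearOn.approximatesLinearOn_iff_lipschitzOnWith, hsub]
    exact hg.neg
  have hsurj := happrox.surjOn_closedBall_of_nonlinearRightInverse
    ⟨id, 1, fun y => by simp, fun _ => rfl⟩ hε subset_rfl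
  rwa [NNReal.coe_one, inv_one] at hsurj

theorem isOpen_setOf_exists_eq_sub_of_nnnorm_fderiv_le {X : Type*} [TopologicalSpace X]
    {W : Set X} {V : Set E} (hW : IsOpen W) (hV : IsOpen V) {R : X × E → E} {c : ℝ≥0}
    (hc : c < 1) (hcont : ∀ v ∈ V, ContinuousOn (fun η => R (η, v)) W)
    (hdiff : ∀ η ∈ W, ∀ v ∈ V, DifferentiableAt ℝ (fun w => R (η, w)) v)
    (hbound : ∀ η ∈ W, ∀ v ∈ V, ‖fderiv ℝ (fun w => R (η, w)) v‖₊ ≤ c) :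
    IsOpen {p : X × E | p.1 ∈ W ∧ ∃ v ∈ V, p.2 = v - R (p.1, v)} := by
  rw [isOpen_iff_mem_nhds]
  rintro ⟨η₀, y₀⟩ ⟨hη₀ : η₀ ∈ W, v₀, hv₀, hy₀⟩
  obtain rfl : y₀ = v₀ - R (η₀, v₀) := hy₀
  obtain ⟨ε, hε, hεV⟩ := nhds_basis_closedBall.mem_iff.1 (hV.mem_nhds hv₀)
  set r := (1 - c) * ε / 2 with hr_def
  have hr : 0 < r := by
    have : (0 : ℝ) < 1 - c := sub_pos.2 (mod_cast hc)
    positivity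
  have hnear : ∀ᶠ η in 𝓝 η₀, η ∈ W ∧ dist (R (η, v₀)) (R (η₀, v₀)) < r :=
    Eventually.and (hW.mem_nhds hη₀)
      (((hcont v₀ hv₀).continuousAt (hW.mem_nhds hη₀)).eventually (ball_mem_nhds _ hr))
  filter_upwards [hnear.prod_nhds (ball_mem_nhds _ hr)] with ⟨η, y⟩ ⟨⟨hη, hηR⟩, hy⟩
  have hlip : LipschitzOnWith c (fun w => R (η, w)) (closedBall v₀ ε) :=
    (convex_closedBall v₀ ε).lipschitzOnWith_of_nnnorm_fderiv_le
      (fun w hw => hdiff η hη w (hεV hw)) (fun w hw => hbound η hη w (hεV hw))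
  have hy' : y ∈ closedBall (v₀ - R (η, v₀)) ((1 - c) * ε) := by
    have := dist_triangle y (v₀ - R (η₀, v₀)) (v₀ - R (η, v₀))
    rw [dist_sub_left, dist_comm (R _)] at this
    rw [mem_closedBall]
    linarith [mem_ball.1 hy]
  obtain ⟨v, hv, hSv⟩ := closedBall_subset_image_sub_of_lipschitzOnWith hε.le hlip hy'
  exact ⟨hη, v, hεV hv, hSv.symm⟩

end

theorem stmt7_general {F : Type*} [NormedAddCommGroup F] [NormedSpace ℝ F]
    (W : Set F) (hWopen : IsOpen W)
    {N : ℕ}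
    (V : Set (EuclideanSpace ℝ (Fin N))) (hVopen : IsOpen V)
    (R : F × EuclideanSpace ℝ (Fin N) → EuclideanSpace ℝ (Fin N))
    (hR : ContDiffOn ℝ 1 R (W ×ˢ V))
    (hD2 : ∀ η ∈ W, ∀ v ∈ V, ‖fderiv ℝ (fun w => R (η, w)) v‖ ≤ 1 / 2) :
    IsOpen {p : F × EuclideanSpace ℝ (Fin N) |
      p.1 ∈ W ∧ ∃ v ∈ V, p.2 = v - R (p.1, v)} := by
  have hWV : IsOpen (W ×ˢ V) := hWopen.prod hVopen
  have hRdiff : ∀ η ∈ W, ∀ v ∈ V, DifferentiableAt ℝ R (η, v) := fun η hη v hv =>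
    (hR.differentiableOn one_ne_zero).differentiableAt (hWV.mem_nhds ⟨hη, hv⟩)
  refine isOpen_setOf_exists_eq_sub_of_nnnorm_fderiv_le hWopen hVopen (c := 1 / 2)
    (by norm_num) (fun v hv η hη => ?_) (fun η hη v hv => ?_) (fun η hη v hv => ?_)
  · exact ((hRdiff η hη v hv).continuousAt.comp (f := fun η => (η, v))
      (by fun_prop)).continuousWithinAt
  · exact (hRdiff η hη v hv).comp v (by fun_prop)
  · rw [← NNReal.coe_le_coe, coe_nnnorm]
    simpa using hD2 η hη v hv

/-- Proposition 3.2(i): with `‖D₂R(η,v)‖ ≤ 1/2` on `W × V`, the set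
`⋃_{η ∈ W} {η} × S_η(V)`, where `S_η(v) = v - R(η,v)`, is open in `F × ℝ^N`. -/
theorem stmt7 {F : Type*} [NormedAddCommGroup F] [NormedSpace ℝ F] [FiniteDimensional ℝ F]
    (W : Set F) (hWopen : IsOpen W) (hWne : W.Nonempty)
    {N : ℕ} (hN : 1 ≤ N)
    (V : Set (EuclideanSpace ℝ (Fin N))) (hVopen : IsOpen V) (hVne : V.Nonempty)
    (R : F × EuclideanSpace ℝ (Fin N) → EuclideanSpace ℝ (Fin N))
    (hR : ContDiffOn ℝ 1 R (W ×ˢ V))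
    (hD2 : ∀ η ∈ W, ∀ v ∈ V, ‖fderiv ℝ (fun w => R (η, w)) v‖ ≤ 1 / 2) :
    IsOpen {p : F × EuclideanSpace ℝ (Fin N) |
      p.1 ∈ W ∧ ∃ v ∈ V, p.2 = v - R (p.1, v)} :=
  stmt7_general W hWopen V hVopen R hR hD2
end

section
/- Let F be a finite-dimensional real normed vector space, W ⊆ F a nonempty open set, N ≥ 1, V ⊆ ℝ^N a nonempty open set, and let R : W × V → ℝ^N be continuously differentiable with ‖D₂R(η,v)‖ ≤ 1/2 for all (η,v) ∈ W × V. Assume in addition that either V = ℝ^N, or ‖R(η,v)‖ < dist(v, ℝ^N∖V)/2 for all (η,v) ∈ W × V. Then for every η ∈ W the map S_η : V → ℝ^N, S_η(v) = v - R(η,v), is injective. -/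
/-!
If `S v = v - R v` identifies `v₁` and `v₂`, then `‖v₁ - v₂‖ = ‖R v₁ - R v₂‖`. Once both points
lie in a convex subset of `V`, the mean value theorem bounds the right side by `‖v₁ - v₂‖ / 2`,
forcing `v₁ = v₂`. For `V = ℝ^N` that convex set is `ℝ^N`; otherwise, if `v₁` is the point
farther from `ℝ^N ∖ V`, the smallness of `R` puts `v₂` in the ball around `v₁` of radius
`dist(v₁, ℝ^N ∖ V)`, which lies in `V`.
-/

open Metric Set

section

variable {E : Type*} [NormedAddCommGroup E]

theorem mem_ball_infDist_compl_of_sub_eq_sub {s : Set E} {f : E → E} {x y : E}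
    (hx : ‖f x‖ < infDist x sᶜ / 2) (hy : ‖f y‖ < infDist y sᶜ / 2)
    (hle : infDist y sᶜ ≤ infDist x sᶜ) (hxy : x - f x = y - f y) :
    y ∈ ball x (infDist x sᶜ) := by
  have hdist : dist y x = ‖f x - f y‖ := by
    rw [dist_eq_norm, norm_sub_rev, sub_eq_sub_iff_sub_eq_sub.mp hxy]
  rw [mem_ball, hdist]
  linarith [norm_sub_le (f x) (f y)]

variable [NormedSpace ℝ E]

theorem Convex.injOn_sub_of_norm_fderiv_le {s : Set E} {f : E → E} {C : ℝ} (hs : Convex ℝ s)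
    (hf : ∀ x ∈ s, DifferentiableAt ℝ f x) (bound : ∀ x ∈ s, ‖fderiv ℝ f x‖ ≤ C) (hC : C < 1) :
    InjOn (fun x => x - f x) s := by
  intro x hx y hy hxy
  have hnorm : ‖x - y‖ = ‖f x - f y‖ := by rw [sub_eq_sub_iff_sub_eq_sub.mp hxy]
  have hlip : ‖f x - f y‖ ≤ C * ‖x - y‖ := hs.norm_image_sub_le_of_norm_fderiv_le hf bound hy hx
  have hzero : ‖x - y‖ ≤ 0 := by nlinarith [norm_nonneg (x - y)]
  exact sub_eq_zero.mp (norm_le_zero_iff.mp hzero)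

theorem injOn_sub_of_norm_fderiv_le_of_norm_lt_infDist {s : Set E} {f : E → E} {C : ℝ}
    (hf : ∀ x ∈ s, DifferentiableAt ℝ f x) (bound : ∀ x ∈ s, ‖fderiv ℝ f x‖ ≤ C) (hC : C < 1)
    (hsmall : ∀ x ∈ s, ‖f x‖ < infDist x sᶜ / 2) :
    InjOn (fun x => x - f x) s := by
  intro x hx y hy hxy
  wlog hle : infDist y sᶜ ≤ infDist x sᶜ generalizing x y
  · exact (this hy hx hxy.symm (le_of_not_ge hle)).symm
  have hy_ball := mem_ball_infDist_compl_of_sub_eq_sub (hsmall x hx) (hsmall y hy) hle hxy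
  have hx_ball : x ∈ ball x (infDist x sᶜ) :=
    mem_ball_self (by linarith [norm_nonneg (f x), hsmall x hx])
  exact (convex_ball x _).injOn_sub_of_norm_fderiv_le
    (fun z hz => hf z (ball_infDist_compl_subset hz))
    (fun z hz => bound z (ball_infDist_compl_subset hz)) hC hx_ball hy_ball hxy

end

theorem stmt8_general {F : Type*} [NormedAddCommGroup F] [NormedSpace ℝ F]
    (W : Set F) (hWopen : IsOpen W)
    {N : ℕ}
    (V : Set (EuclideanSpace ℝ (Fin N))) (hVopen : IsOpen V)
    (R : F × EuclideanSpace ℝ (Fin N) → EuclideanSpace ℝ (Fin N))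
    (hR : ContDiffOn ℝ 1 R (W ×ˢ V))
    (hD2 : ∀ η ∈ W, ∀ v ∈ V, ‖fderiv ℝ (fun w => R (η, w)) v‖ ≤ 1 / 2)
    (hsmall : V = Set.univ ∨ ∀ η ∈ W, ∀ v ∈ V, ‖R (η, v)‖ < Metric.infDist v Vᶜ / 2) :
    ∀ η ∈ W, Set.InjOn (fun v => v - R (η, v)) V := by
  intro η hη
  have hdiff : ∀ v ∈ V, DifferentiableAt ℝ (fun w => R (η, w)) v := fun v hv =>
    ((hR.contDiffAt ((hWopen.prod hVopen).mem_nhds ⟨hη, hv⟩)).comp v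
      (contDiffAt_const.prodMk contDiffAt_id)).differentiableAt one_ne_zero
  have hhalf : (1 / 2 : ℝ) < 1 := by norm_num
  rcases hsmall with rfl | hsmall
  · exact convex_univ.injOn_sub_of_norm_fderiv_le hdiff (hD2 η hη) hhalf
  · exact injOn_sub_of_norm_fderiv_le_of_norm_lt_infDist hdiff (hD2 η hη) hhalf (hsmall η hη)

/-- Proposition 3.2(ii), injectivity: with `‖D₂R(η,v)‖ ≤ 1/2` on `W × V` and either
`V = ℝ^N` or `‖R(η,v)‖ < dist(v, ℝ^N ∖ V)/2` on `W × V`, each map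
`S_η : V → ℝ^N`, `S_η(v) = v - R(η,v)`, is injective. -/
theorem stmt8 {F : Type*} [NormedAddCommGroup F] [NormedSpace ℝ F] [FiniteDimensional ℝ F]
    (W : Set F) (hWopen : IsOpen W) (hWne : W.Nonempty)
    {N : ℕ} (hN : 1 ≤ N)
    (V : Set (EuclideanSpace ℝ (Fin N))) (hVopen : IsOpen V) (hVne : V.Nonempty)
    (R : F × EuclideanSpace ℝ (Fin N) → EuclideanSpace ℝ (Fin N))
    (hR : ContDiffOn ℝ 1 R (W ×ˢ V))
    (hD2 : ∀ η ∈ W, ∀ v ∈ V, ‖fderiv ℝ (fun w => R (η, w)) v‖ ≤ 1 / 2)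
    (hsmall : V = Set.univ ∨ ∀ η ∈ W, ∀ v ∈ V, ‖R (η, v)‖ < Metric.infDist v Vᶜ / 2) :
    ∀ η ∈ W, Set.InjOn (fun v => v - R (η, v)) V :=
  stmt8_general W hWopen V hVopen R hR hD2 hsmall
end

section
/- Let F be a finite-dimensional real normed vector space, W ⊆ F a nonempty open set, N ≥ 1, V ⊆ ℝ^N a nonempty open set, and let R : W × V → ℝ^N be continuously differentiable with ‖D₂R(η,v)‖ ≤ 1/2 for all (η,v) ∈ W × V. Assume either V = ℝ^N or ‖R(η,v)‖ < dist(v, ℝ^N∖V)/2 for all (η,v), so that each S_η : V → ℝ^N, S_η(v) = v - R(η,v), is injective. Then the map Ω → V, (η,y) ↦ S_η⁻¹(y), defined on the open set Ω = ⋃_{η∈W} {η} × S_η(V) ⊆ F × ℝ^N, is continuously differentiable. -/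
/-!
If `S_η v₁ = S_η v₂` then `‖v₁ - v₂‖ ≤ ‖R (η, v₁)‖ + ‖R (η, v₂)‖`, which by the smallness of `R`
is less than the distance from `v₁` or from `v₂` to `Vᶜ`; so the segment `[v₁, v₂]` lies in `V`,
where the mean value inequality makes `R (η, ·)` a `1/2`-contraction, and `v₁ = v₂`.

For smoothness, apply the implicit function theorem to `G ((η, y), v) = v - R (η, v) - y`: its
partial derivative in `v` is `id - D₂R`, invertible by the Neumann series since `‖D₂R‖ < 1`.
This gives a `C¹` local solution near each point of `Ω`, which by injectivity is `S_η⁻¹`.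
-/

open Metric Set Function Filter Topology

section Calculus

variable {𝕜 : Type*} [NontriviallyNormedField 𝕜]
  {E : Type*} [NormedAddCommGroup E] [NormedSpace 𝕜 E]

lemma ContinuousLinearMap.isInvertible_id_sub_of_norm_lt_one [CompleteSpace E] {B : E →L[𝕜] E}
    (hB : ‖B‖ < 1) : (ContinuousLinearMap.id 𝕜 E - B).IsInvertible := by
  obtain ⟨u, hu⟩ := isUnit_one_sub_of_norm_lt_one hB
  exact ⟨ContinuousLinearEquiv.unitsEquiv 𝕜 E u, by ext; simp [hu]⟩

variable {F G : Type*} [NormedAddCommGroup F] [NormedSpace 𝕜 F]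
  [NormedAddCommGroup G] [NormedSpace 𝕜 G]

lemma fderiv_comp_inr {f : E × F → G} {x : E × F} (hf : DifferentiableAt 𝕜 f x) :
    fderiv 𝕜 f x ∘L .inr 𝕜 E F = fderiv 𝕜 (fun y => f (x.1, y)) x.2 :=
  ((hf.hasFDerivAt.comp x.2 (hasFDerivAt_prodMk_right x.1 x.2))).fderiv.symm

end Calculus

section Segment

variable {E : Type*} [NormedAddCommGroup E] [NormedSpace ℝ E]

lemma segment_subset_of_dist_lt_infDist {s : Set E} {x y : E} (h : dist y x < infDist x sᶜ) :
    segment ℝ x y ⊆ s :=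
  ((convex_ball x _).segment_subset (mem_ball_self (dist_nonneg.trans_lt h)) h).trans
    ball_infDist_compl_subset

lemma segment_subset_of_dist_lt_max_infDist {s : Set E} {x y : E}
    (h : dist x y < max (infDist x sᶜ) (infDist y sᶜ)) : segment ℝ x y ⊆ s := by
  rcases lt_max_iff.1 h with h | h
  · exact segment_subset_of_dist_lt_infDist (dist_comm x y ▸ h)
  · exact segment_symm ℝ x y ▸ segment_subset_of_dist_lt_infDist h

lemma eq_of_sub_eq_sub_of_norm_fderiv_le {f : E → E} {x y : E} {C : ℝ} (hC : C < 1)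
    (hf : ∀ z ∈ segment ℝ x y, DifferentiableAt ℝ f z)
    (hf' : ∀ z ∈ segment ℝ x y, ‖fderiv ℝ f z‖ ≤ C) (h : x - f x = y - f y) : x = y := by
  have hlip : ‖f y - f x‖ ≤ C * ‖y - x‖ :=
    (convex_segment x y).norm_image_sub_le_of_norm_fderiv_le hf hf'
      (left_mem_segment ℝ x y) (right_mem_segment ℝ x y)
  rw [← sub_eq_sub_iff_sub_eq_sub.mp h.symm] at hlip
  have : ‖y - x‖ ≤ 0 := by nlinarith [norm_nonneg (y - x)]
  exact (sub_eq_zero.1 (norm_le_zero_iff.1 this)).symm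

end Segment

section Perturbation

variable {F E : Type*} [NormedAddCommGroup E] [NormedSpace ℝ E] {W : Set F} {V : Set E}
  {R : F × E → E}

lemma segment_subset_of_sub_eq_sub
    (hsmall : V = univ ∨ ∀ η ∈ W, ∀ v ∈ V, ‖R (η, v)‖ < infDist v Vᶜ / 2)
    {η : F} (hη : η ∈ W) {v₁ v₂ : E} (hv₁ : v₁ ∈ V) (hv₂ : v₂ ∈ V)
    (h : v₁ - R (η, v₁) = v₂ - R (η, v₂)) : segment ℝ v₁ v₂ ⊆ V := by
  rcases hsmall with rfl | hsmall
  · exact subset_univ _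
  apply segment_subset_of_dist_lt_max_infDist
  calc dist v₁ v₂ = ‖R (η, v₁) - R (η, v₂)‖ := by
        rw [dist_eq_norm, sub_eq_sub_iff_sub_eq_sub.mp h]
    _ ≤ ‖R (η, v₁)‖ + ‖R (η, v₂)‖ := norm_sub_le _ _
    _ < infDist v₁ Vᶜ / 2 + infDist v₂ Vᶜ / 2 :=
        add_lt_add (hsmall η hη v₁ hv₁) (hsmall η hη v₂ hv₂)
    _ ≤ max (infDist v₁ Vᶜ) (infDist v₂ Vᶜ) := by
        linarith [le_max_left (infDist v₁ Vᶜ) (infDist v₂ Vᶜ),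
          le_max_right (infDist v₁ Vᶜ) (infDist v₂ Vᶜ)]

lemma injOn_sub_apply [NormedAddCommGroup F] [NormedSpace ℝ F] (hW : IsOpen W) (hV : IsOpen V)
    (hR : ContDiffOn ℝ 1 R (W ×ˢ V))
    {C : ℝ} (hC : C < 1) (hD2 : ∀ η ∈ W, ∀ v ∈ V, ‖fderiv ℝ (fun w => R (η, w)) v‖ ≤ C)
    (hsmall : V = univ ∨ ∀ η ∈ W, ∀ v ∈ V, ‖R (η, v)‖ < infDist v Vᶜ / 2)
    {η : F} (hη : η ∈ W) : InjOn (fun v => v - R (η, v)) V := by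
  intro v₁ hv₁ v₂ hv₂ h
  have hseg := segment_subset_of_sub_eq_sub hsmall hη hv₁ hv₂ h
  refine eq_of_sub_eq_sub_of_norm_fderiv_le (f := fun w => R (η, w)) hC
    (fun z hz => ?_) (fun z hz => ?_) h
  · have hRz := hR.contDiffAt (prod_mem_nhds (hW.mem_nhds hη) (hV.mem_nhds (hseg hz)))
    exact (hRz.differentiableAt one_ne_zero).comp z (by fun_prop)
  · exact hD2 η hη z (hseg hz)

lemma exists_local_contDiffAt_solution [NormedAddCommGroup F] [NormedSpace ℝ F] [CompleteSpace F]
    [CompleteSpace E] {η₀ : F} {v₀ : E}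
    (hR : ContDiffAt ℝ 1 R (η₀, v₀)) (hD2 : ‖fderiv ℝ (fun w => R (η₀, w)) v₀‖ < 1) :
    ∃ ψ : F × E → E, ContDiffAt ℝ 1 ψ (η₀, v₀ - R (η₀, v₀)) ∧ ψ (η₀, v₀ - R (η₀, v₀)) = v₀ ∧
      ∀ᶠ q in 𝓝 (η₀, v₀ - R (η₀, v₀)), ψ q - R (q.1, ψ q) = q.2 := by
  set G : (F × E) × E → E := fun x => x.2 - R (x.1.1, x.2) - x.1.2
  set u : (F × E) × E := ((η₀, v₀ - R (η₀, v₀)), v₀)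
  have hG : ContDiffAt ℝ 1 G u :=
    (contDiffAt_snd.sub (hR.comp u (contDiffAt_fst.fst.prodMk contDiffAt_snd))).sub
      contDiffAt_fst.snd
  have hGv : fderiv ℝ G u ∘L .inr ℝ (F × E) E = .id ℝ E - fderiv ℝ (fun w => R (η₀, w)) v₀ := by
    have hRv : DifferentiableAt ℝ (fun w => R (η₀, w)) v₀ :=
      (hR.differentiableAt one_ne_zero).comp v₀ (by fun_prop)
    rw [fderiv_comp_inr (hG.differentiableAt one_ne_zero)]
    simp only [G, u, fderiv_sub_const]
    rw [fderiv_fun_sub differentiableAt_fun_id hRv, fderiv_fun_id]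
  have hinv := ContinuousLinearMap.isInvertible_id_sub_of_norm_lt_one hD2
  rw [← hGv] at hinv
  refine ⟨hG.implicitFunction one_ne_zero hinv, hG.contDiffAt_implicitFunction one_ne_zero hinv,
    hG.implicitFunction_apply_self one_ne_zero hinv, ?_⟩
  filter_upwards [hG.eventually_apply_implicitFunction one_ne_zero hinv] with q hq
  simpa [G, u, sub_eq_zero] using hq

end Perturbation

theorem stmt10_general {F : Type*} [NormedAddCommGroup F] [NormedSpace ℝ F] [FiniteDimensional ℝ F]
    (W : Set F) (hWopen : IsOpen W)
    {N : ℕ}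
    (V : Set (EuclideanSpace ℝ (Fin N))) (hVopen : IsOpen V)
    (R : F × EuclideanSpace ℝ (Fin N) → EuclideanSpace ℝ (Fin N))
    (hR : ContDiffOn ℝ 1 R (W ×ˢ V))
    (hD2 : ∀ η ∈ W, ∀ v ∈ V, ‖fderiv ℝ (fun w => R (η, w)) v‖ ≤ 1 / 2)
    (hsmall : V = Set.univ ∨ ∀ η ∈ W, ∀ v ∈ V, ‖R (η, v)‖ < Metric.infDist v Vᶜ / 2) :
    ∃ Φ : F × EuclideanSpace ℝ (Fin N) → EuclideanSpace ℝ (Fin N),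
      ContDiffOn ℝ 1 Φ {p : F × EuclideanSpace ℝ (Fin N) |
        p.1 ∈ W ∧ ∃ v ∈ V, p.2 = v - R (p.1, v)} ∧
      ∀ p ∈ {p : F × EuclideanSpace ℝ (Fin N) | p.1 ∈ W ∧ ∃ v ∈ V, p.2 = v - R (p.1, v)},
        Φ p ∈ V ∧ Φ p - R (p.1, Φ p) = p.2 := by
  have hinj η (hη : η ∈ W) : InjOn (fun v => v - R (η, v)) V :=
    injOn_sub_apply hWopen hVopen hR (by norm_num) hD2 hsmall hη
  refine ⟨fun p => invFunOn (fun v => v - R (p.1, v)) V p.2, ?_, ?_⟩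
  · rintro ⟨η₀, y₀⟩ ⟨hη₀, v₀, hv₀, hy₀ : y₀ = v₀ - R (η₀, v₀)⟩
    subst hy₀
    have hRv₀ : ContDiffAt ℝ 1 R (η₀, v₀) :=
      hR.contDiffAt (prod_mem_nhds (hWopen.mem_nhds hη₀) (hVopen.mem_nhds hv₀))
    obtain ⟨ψ, hψ, hψv₀, hψeq⟩ :=
      exists_local_contDiffAt_solution hRv₀ ((hD2 η₀ hη₀ v₀ hv₀).trans_lt (by norm_num))
    refine (hψ.congr_of_eventuallyEq ?_).contDiffWithinAt
    have hψV : ∀ᶠ q in 𝓝 (η₀, v₀ - R (η₀, v₀)), ψ q ∈ V :=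
      hψ.continuousAt.eventually_mem (by rw [hψv₀]; exact hVopen.mem_nhds hv₀)
    have hW : ∀ᶠ q in 𝓝 (η₀, v₀ - R (η₀, v₀)), q.1 ∈ W :=
      continuousAt_fst.eventually_mem (hWopen.mem_nhds hη₀)
    filter_upwards [hψeq, hψV, hW] with q hq hqV hqW
    rw [← hq]
    exact (hinj q.1 hqW).leftInvOn_invFunOn hqV
  · rintro p ⟨-, v, hv, hp⟩
    have hpre : ∃ w ∈ V, w - R (p.1, w) = p.2 := ⟨v, hv, hp.symm⟩
    exact ⟨invFunOn_mem hpre, invFunOn_eq hpre⟩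

/-- Proposition 3.2(iii): under the hypotheses guaranteeing injectivity of each
`S_η(v) = v - R(η,v)`, the map `(η,y) ↦ S_η⁻¹(y)` on `Ω = ⋃_{η ∈ W} {η} × S_η(V)`
is continuously differentiable: there is a `C¹` map `Φ` on `Ω` with `Φ(η,y) ∈ V` and
`Φ(η,y) - R(η,Φ(η,y)) = y` for all `(η,y) ∈ Ω`. -/
theorem stmt10 {F : Type*} [NormedAddCommGroup F] [NormedSpace ℝ F] [FiniteDimensional ℝ F]
    (W : Set F) (hWopen : IsOpen W) (hWne : W.Nonempty)
    {N : ℕ} (hN : 1 ≤ N)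
    (V : Set (EuclideanSpace ℝ (Fin N))) (hVopen : IsOpen V) (hVne : V.Nonempty)
    (R : F × EuclideanSpace ℝ (Fin N) → EuclideanSpace ℝ (Fin N))
    (hR : ContDiffOn ℝ 1 R (W ×ˢ V))
    (hD2 : ∀ η ∈ W, ∀ v ∈ V, ‖fderiv ℝ (fun w => R (η, w)) v‖ ≤ 1 / 2)
    (hsmall : V = Set.univ ∨ ∀ η ∈ W, ∀ v ∈ V, ‖R (η, v)‖ < Metric.infDist v Vᶜ / 2) :
    ∃ Φ : F × EuclideanSpace ℝ (Fin N) → EuclideanSpace ℝ (Fin N),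
      ContDiffOn ℝ 1 Φ {p : F × EuclideanSpace ℝ (Fin N) |
        p.1 ∈ W ∧ ∃ v ∈ V, p.2 = v - R (p.1, v)} ∧
      ∀ p ∈ {p : F × EuclideanSpace ℝ (Fin N) | p.1 ∈ W ∧ ∃ v ∈ V, p.2 = v - R (p.1, v)},
        Φ p ∈ V ∧ Φ p - R (p.1, Φ p) = p.2 :=
  stmt10_general W hWopen V hVopen R hR hD2 hsmall
end

section
/- Suppose for each ν ∈ {1,…,n} and each v ∈ V a continuously differentiable function H_ν(v) : [-r,0] → ℝ is given with L(H_ν(v)·e_ν) = 0. Define S : W × V → ℝ^{nk} by S_{(κ-1)n+ν}(η,v) = v_{(κ-1)n+ν} - g_ν(v)·H_ν(v)(-d_κ(η)), and assume that for every η ∈ W the map S_η = S(η,·) : V → ℝ^{nk} is injective. Let 𝒰 = {φ : [-r,0] → ℝ^n : φ continuously differentiable, Lφ ∈ W, φ̂ ∈ V} and 𝒪 = {χ : [-r,0] → ℝ^n : χ continuously differentiable, Lχ ∈ W, χ̂ ∈ S_{Lχ}(V)}. Define A on 𝒰 by (A(φ))_ν(t) = φ_ν(t) - g_ν(φ̂)·H_ν(φ̂)(t).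 Then A maps 𝒰 into 𝒪 and is a bijection from 𝒰 onto 𝒪, whose inverse sends χ ∈ 𝒪 to the function with components t ↦ χ_ν(t) + g_ν(v)·H_ν(v)(t), where v is the unique element of V with S_{Lχ}(v) = χ̂. -/
lemma restrC_apply {E : Type*} [TopologicalSpace E] [Zero E] {r : ℝ} {φ : ℝ → E}
    (h : ContinuousOn φ (Set.Icc (-r) 0)) (x : Set.Icc (-r) (0:ℝ)) :
    restrC r φ x = φ x := by
  rw [restrC, dif_pos h]
  rfl

/-- Propositions 3.3 and 3.4 combined: with `L(H_ν(v)·e_ν) = 0`, the maps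
`S_η(v)_{(κ-1)n+ν} = v_{(κ-1)n+ν} - g_ν(v)·H_ν(v)(-d_κ(η))` injective on `V` for each
`η ∈ W`, `𝒰 = {φ C¹ : Lφ ∈ W, φ̂ ∈ V}`, `𝒪 = {χ C¹ : Lχ ∈ W, χ̂ ∈ S_{Lχ}(V)}` and
`A(φ)_ν = φ_ν - g_ν(φ̂)·H_ν(φ̂)`, the map `A` is a bijection from `𝒰` onto `𝒪`, whose
inverse sends `χ ∈ 𝒪` to `χ + g(v)·H(v)` where `v` is the unique element of `V` with
`S_{Lχ}(v) = χ̂`. Functions on `[-r,0]` are encoded via `C¹` functions on `ℝ`. -/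
theorem stmt14 (r : ℝ) (hr : 0 < r) (n k : ℕ) (hn : 0 < n) (hk : 0 < k)
    {F : Type*} [NormedAddCommGroup F] [NormedSpace ℝ F] [FiniteDimensional ℝ F]
    (L : C(Set.Icc (-r) (0:ℝ), Fin n → ℝ) →L[ℝ] F)
    (W : Set F) (hWopen : IsOpen W) (hWne : W.Nonempty)
    (d : Fin k → F → ℝ) (hd : ∀ κ, ContDiffOn ℝ 1 (d κ) W)
    (hdr : ∀ κ, ∀ η ∈ W, d κ η ∈ Set.Icc (0:ℝ) r)
    (V : Set (Fin k × Fin n → ℝ)) (hVopen : IsOpen V) (hVne : V.Nonempty)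
    (g : (Fin k × Fin n → ℝ) → Fin n → ℝ) (hg : ContDiffOn ℝ 1 g V)
    (H : Fin n → (Fin k × Fin n → ℝ) → ℝ → ℝ)
    (hH : ∀ ν, ∀ w ∈ V, ContDiff ℝ 1 (H ν w))
    (hHL : ∀ ν, ∀ w ∈ V, L (restrC r (fun t => Pi.single ν (H ν w t))) = 0)
    (S : F → (Fin k × Fin n → ℝ) → Fin k × Fin n → ℝ)
    (hS : S = fun η v i => v i - g v i.2 * H i.2 v (-(d i.1 η)))
    (hSinj : ∀ η ∈ W, Set.InjOn (S η) V)
    (U : Set (ℝ → Fin n → ℝ))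
    (hU : U = {φ | ContDiff ℝ 1 φ ∧ L (restrC r φ) ∈ W ∧
      (fun i : Fin k × Fin n => φ (-(d i.1 (L (restrC r φ)))) i.2) ∈ V})
    (O : Set (ℝ → Fin n → ℝ))
    (hO : O = {χ | ContDiff ℝ 1 χ ∧ L (restrC r χ) ∈ W ∧
      (fun i : Fin k × Fin n => χ (-(d i.1 (L (restrC r χ)))) i.2) ∈ S (L (restrC r χ)) '' V})
    (A : (ℝ → Fin n → ℝ) → ℝ → Fin n → ℝ)
    (hA : A = fun φ t ν => φ t ν -
      g (fun i : Fin k × Fin n => φ (-(d i.1 (L (restrC r φ)))) i.2) ν *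
        H ν (fun i : Fin k × Fin n => φ (-(d i.1 (L (restrC r φ)))) i.2) t) :
    Set.BijOn A U O ∧
    ∀ χ ∈ O, ∀ v ∈ V,
      S (L (restrC r χ)) v = (fun i : Fin k × Fin n => χ (-(d i.1 (L (restrC r χ)))) i.2) →
      (fun t ν => χ t ν + g v ν * H ν v t) ∈ U ∧
      A (fun t ν => χ t ν + g v ν * H ν v t) = χ := by
  classical
  -- key: L is invariant under adding multiples of the H's
  have keyL : ∀ (φ : ℝ → Fin n → ℝ), Continuous φ → ∀ v ∈ V, ∀ c : Fin n → ℝ,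
      L (restrC r (fun t ν => φ t ν + c ν * H ν v t)) = L (restrC r φ) := by
    intro φ hφ v hv c
    have hHc : ∀ ν : Fin n, Continuous (fun t => (Pi.single ν (H ν v t) : Fin n → ℝ)) := by
      intro ν
      refine continuous_pi fun j => ?_
      simp only [Pi.single_apply]
      split_ifs
      · exact (hH ν v hv).continuous
      · exact continuous_const
    have h1 : Continuous (fun t ν => φ t ν + c ν * H ν v t) :=
      continuous_pi fun ν =>
        ((continuous_apply ν).comp hφ).add (continuous_const.mul (hH ν v hv).continuous)
    have hsum : restrC r (fun t ν => φ t ν + c ν * H ν v t)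
        = restrC r φ
          + ∑ ν : Fin n, c ν • restrC r (fun t => (Pi.single ν (H ν v t) : Fin n → ℝ)) := by
      ext x j
      have hx : ∀ ν : Fin n,
          restrC r (fun t => (Pi.single ν (H ν v t) : Fin n → ℝ)) x = Pi.single ν (H ν v x) :=
        fun ν => restrC_apply (hHc ν).continuousOn x
      rw [restrC_apply h1.continuousOn x]
      simp only [ContinuousMap.add_apply, ContinuousMap.sum_apply, ContinuousMap.smul_apply,
        restrC_apply hφ.continuousOn, hx, Pi.add_apply, Finset.sum_apply, Pi.smul_apply,
        smul_eq_mul, Pi.single_apply, mul_ite, mul_zero, Finset.sum_ite_eq, Finset.mem_univ,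
        if_true]
    rw [hsum, map_add, map_sum]
    have hz : ∀ ν ∈ Finset.univ (α := Fin n),
        L (c ν • restrC r (fun t => (Pi.single ν (H ν v t) : Fin n → ℝ))) = (0:F) :=
      fun ν _ => by rw [map_smul, hHL ν v hv, smul_zero]
    rw [Finset.sum_eq_zero hz, add_zero]
  have hLsub : ∀ (φ : ℝ → Fin n → ℝ), Continuous φ → ∀ v ∈ V,
      L (restrC r (fun t ν => φ t ν - g v ν * H ν v t)) = L (restrC r φ) := by
    intro φ hφ v hv
    have heq : (fun t ν => φ t ν - g v ν * H ν v t)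
        = fun t ν => φ t ν + (fun μ => -(g v μ)) ν * H ν v t := by
      funext t ν; ring
    rw [heq]
    exact keyL φ hφ v hv _
  have hAdef : ∀ φ : ℝ → Fin n → ℝ, A φ = fun t ν => φ t ν -
      g (fun i : Fin k × Fin n => φ (-(d i.1 (L (restrC r φ)))) i.2) ν *
        H ν (fun i : Fin k × Fin n => φ (-(d i.1 (L (restrC r φ)))) i.2) t := by
    intro φ; rw [hA]
  have hLA : ∀ φ : ℝ → Fin n → ℝ, Continuous φ →
      (fun i : Fin k × Fin n => φ (-(d i.1 (L (restrC r φ)))) i.2) ∈ V →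
      L (restrC r (A φ)) = L (restrC r φ) := by
    intro φ hφ hv
    rw [hAdef φ]
    exact hLsub φ hφ _ hv
  have hAC1 : ∀ φ : ℝ → Fin n → ℝ, ContDiff ℝ 1 φ →
      (fun i : Fin k × Fin n => φ (-(d i.1 (L (restrC r φ)))) i.2) ∈ V →
      ContDiff ℝ 1 (A φ) := by
    intro φ hφ hv
    rw [hAdef φ]
    exact contDiff_pi.2 fun ν => (contDiff_pi.1 hφ ν).sub (contDiff_const.mul (hH ν _ hv))
  have hhatA : ∀ φ : ℝ → Fin n → ℝ, Continuous φ →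
      ∀ hv : (fun i : Fin k × Fin n => φ (-(d i.1 (L (restrC r φ)))) i.2) ∈ V,
      (fun i : Fin k × Fin n => A φ (-(d i.1 (L (restrC r (A φ))))) i.2)
        = S (L (restrC r φ)) (fun i : Fin k × Fin n => φ (-(d i.1 (L (restrC r φ)))) i.2) := by
    intro φ hφ hv
    have hL := hLA φ hφ hv
    rw [hS]
    funext i
    rw [hL, hAdef φ]
  have hmaps : Set.MapsTo A U O := by
    intro φ hφ
    rw [hU, Set.mem_setOf_eq] at hφ
    obtain ⟨h1, h2, h3⟩ := hφ
    rw [hO, Set.mem_setOf_eq]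
    refine ⟨hAC1 φ h1 h3, ?_, ?_⟩
    · rw [hLA φ h1.continuous h3]; exact h2
    · rw [hhatA φ h1.continuous h3, hLA φ h1.continuous h3]
      exact ⟨_, h3, rfl⟩
  have hinj : Set.InjOn A U := by
    intro φ hφ ψ hψ hEq
    rw [hU, Set.mem_setOf_eq] at hφ hψ
    obtain ⟨hφ1, hφ2, hφ3⟩ := hφ
    obtain ⟨hψ1, hψ2, hψ3⟩ := hψ
    have hLφψ : L (restrC r φ) = L (restrC r ψ) := by
      rw [← hLA φ hφ1.continuous hφ3, ← hLA ψ hψ1.continuous hψ3, hEq]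
    have hhat : S (L (restrC r φ))
          (fun i : Fin k × Fin n => φ (-(d i.1 (L (restrC r φ)))) i.2)
        = S (L (restrC r φ))
          (fun i : Fin k × Fin n => ψ (-(d i.1 (L (restrC r ψ)))) i.2) := by
      rw [← hhatA φ hφ1.continuous hφ3]
      conv_rhs => rw [hLφψ, ← hhatA ψ hψ1.continuous hψ3]
      rw [hEq]
    have hv := hSinj _ hφ2 hφ3 hψ3 hhat
    funext t ν
    have h1 := congrFun (congrFun hEq t) ν
    rw [hAdef φ, hAdef ψ] at h1
    simp only [] at h1
    rw [hv] at h1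
    linarith [h1]
  have part2 : ∀ χ ∈ O, ∀ v ∈ V,
      S (L (restrC r χ)) v = (fun i : Fin k × Fin n => χ (-(d i.1 (L (restrC r χ)))) i.2) →
      (fun t ν => χ t ν + g v ν * H ν v t) ∈ U ∧
      A (fun t ν => χ t ν + g v ν * H ν v t) = χ := by
    intro χ hχ v hv hSv
    rw [hO, Set.mem_setOf_eq] at hχ
    obtain ⟨hχ1, hχ2, -⟩ := hχ
    have hψ1 : ContDiff ℝ 1 (fun t ν => χ t ν + g v ν * H ν v t) :=
      contDiff_pi.2 fun ν => (contDiff_pi.1 hχ1 ν).add (contDiff_const.mul (hH ν v hv))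
    have hLψ : L (restrC r (fun t ν => χ t ν + g v ν * H ν v t)) = L (restrC r χ) :=
      keyL χ hχ1.continuous v hv (g v)
    have hhatψ : (fun i : Fin k × Fin n =>
        (fun t ν => χ t ν + g v ν * H ν v t)
          (-(d i.1 (L (restrC r (fun t ν => χ t ν + g v ν * H ν v t))))) i.2) = v := by
      funext i
      have h := congrFun hSv i
      rw [hS] at h
      simp only [] at h ⊢
      rw [hLψ]
      linarith [h]
    have hmemU : (fun t ν => χ t ν + g v ν * H ν v t) ∈ U := by
      rw [hU, Set.mem_setOf_eq]
      refine ⟨hψ1, by rw [hLψ]; exact hχ2, by rw [hhatψ]; exact hv⟩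
    refine ⟨hmemU, ?_⟩
    rw [hAdef, hhatψ]
    funext t ν
    show χ t ν + g v ν * H ν v t - g v ν * H ν v t = χ t ν
    ring
  have hsurj : Set.SurjOn A U O := by
    intro χ hχ
    have hχ' := hχ
    rw [hO, Set.mem_setOf_eq] at hχ'
    obtain ⟨hχ1, hχ2, v, hvV, hSv⟩ := hχ'
    obtain ⟨hmem, hAeq⟩ := part2 χ hχ v hvV hSv
    exact ⟨_, hmem, hAeq⟩
  exact ⟨⟨hmaps, hinj, hsurj⟩, part2⟩
end
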